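/- arXiv:2501.14444 — 8 statements merged into one kernel-verified Lean document; each statement's English description precedes it below -/
import Mathlib

section
/- Let F be an algebraically closed field of characteristic different from 2 and let n be a positive integer. Let M be a symmetric 2n×2n matrix over F and set A = Ω₀⁻¹ * M. Assume the characteristic polynomial of A is separable (i.e. A has 2n pairwise distinct eigenvalues). Then there exist a matrix Ψ over F with IsUnit Ψ.det and a function λ : Fin n → F such that Ψ⁻¹ * A * Ψ is the diagonal matrix whose entry at (i,0) is λ i and whose entry at (i,1) is -λ i, and such that (Ψᵀ * Ω₀ * Ψ) (i,a) (j,b) = 0 whenever i ≠ j (so Ψᵀ * Ω₀ * Ψ is block-diagonal with blocks of size two). -/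
open Matrix Polynomial Pointwise Function

/-!
Since `Ω₀ A = M` is symmetric and `Ω₀` is antisymmetric, `A` is conjugate to `-Aᵀ`, so its
spectrum is closed under negation. The `2n` eigenvalues being distinct and `2n` even, `0` is not
among them, and they split into pairs `±λᵢ`. The eigenvectors form a basis `Ψ`; with `D` the
diagonal of eigenvalues, `W = Ψᵀ Ω₀ Ψ` is antisymmetric while `W D = Ψᵀ M Ψ` is symmetric, so
`W x y * (d x + d y) = 0`, and `d x + d y ≠ 0` unless `x` and `y` belong to the same pair.
-/

/-- The standard symplectic form on `F^(2n)`, with indices `Fin n × Fin 2`. -/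
def OmegaStd (F : Type*) [Zero F] [One F] [Neg F] (n : ℕ) :
    Matrix (Fin n × Fin 2) (Fin n × Fin 2) F :=
  fun x y =>
    if x.1 = y.1 ∧ x.2 = 0 ∧ y.2 = 1 then 1
    else if x.1 = y.1 ∧ x.2 = 1 ∧ y.2 = 0 then -1
    else 0

section OmegaStd

variable (R : Type*) (n : ℕ)

theorem omegaStd_transpose [Ring R] : (OmegaStd R n)ᵀ = -OmegaStd R n := by
  ext ⟨i, a⟩ ⟨j, b⟩
  by_cases h : i = j
  · subst h; fin_cases a <;> fin_cases b <;> simp [OmegaStd]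
  · simp [OmegaStd, h, Ne.symm h]

theorem omegaStd_mul_self [Ring R] : OmegaStd R n * OmegaStd R n = -1 := by
  ext ⟨i, a⟩ ⟨j, b⟩
  rw [mul_apply, Fintype.sum_prod_type, Finset.sum_eq_single i]
  · by_cases h : i = j
    · subst h; fin_cases a <;> fin_cases b <;> simp [OmegaStd, one_apply]
    · simp [OmegaStd, one_apply, h]
  · intro k _ hk
    simp [OmegaStd, Ne.symm hk]
  · simp

theorem isUnit_det_omegaStd [CommRing R] : IsUnit (OmegaStd R n).det :=
  isUnit_det_of_right_inverse (B := -OmegaStd R n) (by rw [mul_neg, omegaStd_mul_self, neg_neg])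

end OmegaStd

namespace Matrix

variable {m R : Type*} [Fintype m] [DecidableEq m]

theorem eval_charpoly_neg_transpose [CommRing R] (A : Matrix m m R) (r : R) :
    (-Aᵀ).charpoly.eval (-r) = (-1) ^ Fintype.card m * A.charpoly.eval r := by
  rw [eval_charpoly, eval_charpoly, ← det_neg, ← det_transpose]
  congr 1
  ext i j
  simp only [transpose_apply, sub_apply, neg_apply, scalar_apply, diagonal_apply, eq_comm (a := i)]
  split_ifs <;> ring

theorem charpoly_eq_charpoly_neg_transpose [CommRing R] {J A : Matrix m m R}
    (hJ : IsUnit J.det) (hJT : Jᵀ = -J) (hJA : (J * A)ᵀ = J * A) :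
    A.charpoly = (-Aᵀ).charpoly := by
  have hconj : -Aᵀ * J = J * A := by
    rw [← hJA, transpose_mul, hJT, mul_neg, neg_mul]
  calc A.charpoly = (J⁻¹ * (-Aᵀ * J)).charpoly := by
        rw [hconj, nonsing_inv_mul_cancel_left _ _ hJ]
    _ = (-Aᵀ).charpoly := by
        rw [charpoly_mul_comm, mul_assoc, mul_nonsing_inv _ hJ, mul_one]

theorem isRoot_charpoly_neg [CommRing R] {J A : Matrix m m R}
    (hJ : IsUnit J.det) (hJT : Jᵀ = -J) (hJA : (J * A)ᵀ = J * A) {r : R}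
    (hr : A.charpoly.IsRoot r) : A.charpoly.IsRoot (-r) := by
  rw [IsRoot, charpoly_eq_charpoly_neg_transpose hJ hJT hJA, eval_charpoly_neg_transpose,
    hr.eq_zero, mul_zero]

theorem exists_isUnit_det_mul_eq_mul_diagonal [Field R] {A : Matrix m m R} {d : m → R}
    (hd : Injective d) (hroot : ∀ i, A.charpoly.IsRoot (d i)) :
    ∃ P : Matrix m m R, IsUnit P.det ∧ A * P = P * diagonal d := by
  have hev : ∀ i, ∃ v : m → R, v ≠ 0 ∧ A *ᵥ v = d i • v := by
    intro i
    obtain ⟨v, hv0, hv⟩ :=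
      exists_mulVec_eq_zero_iff.mpr ((eval_charpoly A (d i)).symm.trans (hroot i))
    refine ⟨v, hv0, ?_⟩
    rwa [sub_mulVec, scalar_apply, ← smul_one_eq_diagonal, smul_mulVec, one_mulVec, sub_eq_zero,
      eq_comm] at hv
  choose v hv0 hv using hev
  refine ⟨(of v)ᵀ, (isUnit_iff_isUnit_det _).mp (linearIndependent_cols_iff_isUnit.mp ?_), ?_⟩
  · exact (Module.End.eigenvectors_linearIndependent' (mulVecLin A) d hd v
      fun i => ⟨Module.End.mem_eigenspace_iff.mpr (hv i), hv0 i⟩)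
  · ext r c
    rw [mul_diagonal]
    simpa [mul_apply, mulVec, dotProduct, mul_comm] using congrFun (hv c) r

theorem apply_eq_zero_of_mul_diagonal_symm [CommRing R] [NoZeroDivisors R] {W : Matrix m m R}
    {d : m → R} (hW : Wᵀ = -W) (hWd : (W * diagonal d)ᵀ = W * diagonal d) {x y : m}
    (hxy : d x + d y ≠ 0) : W x y = 0 := by
  have h := congrFun (congrFun hWd y) x
  rw [transpose_apply, mul_diagonal, mul_diagonal] at h
  have hyx : W y x = -W x y := congrFun (congrFun hW x) y
  have hsum : W x y * (d x + d y) = 0 := by linear_combination h + d x * hyx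
  exact (mul_eq_zero.mp hsum).resolve_right hxy

end Matrix

section Involution

variable {α : Type*} [InvolutiveNeg α]

theorem Finset.exists_disjoint_neg_union_neg_eq [DecidableEq α] (S : Finset α)
    (hneg : ∀ x ∈ S, -x ∈ S) (hfix : ∀ x ∈ S, -x ≠ x) :
    ∃ H ⊆ S, Disjoint H (-H) ∧ H ∪ -H = S := by
  classical
  refine ⟨S.filter fun x => WellOrderingRel x (-x), Finset.filter_subset _ _, ?_, ?_⟩
  · refine Finset.disjoint_left.mpr fun x hx hx' => ?_
    rw [Finset.mem_neg', Finset.mem_filter, neg_neg] at hx'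
    exact asymm (Finset.mem_filter.mp hx).2 hx'.2
  · ext x
    simp only [Finset.mem_union, Finset.mem_neg', Finset.mem_filter, neg_neg]
    constructor
    · rintro (⟨hx, -⟩ | ⟨hx, -⟩)
      · exact hx
      · simpa using hneg _ hx
    · intro hx
      rcases trichotomous_of WellOrderingRel x (-x) with h | h | h
      · exact .inl ⟨hx, h⟩
      · exact absurd h.symm (hfix x hx)
      · exact .inr ⟨hneg x hx, h⟩

theorem Finset.exists_card_eq_two_mul [DecidableEq α] (S : Finset α)
    (hneg : ∀ x ∈ S, -x ∈ S) (hfix : ∀ x ∈ S, -x ≠ x) :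
    ∃ H ⊆ S, Disjoint H (-H) ∧ S.card = 2 * H.card := by
  obtain ⟨H, hHS, hdisj, hunion⟩ := S.exists_disjoint_neg_union_neg_eq hneg hfix
  refine ⟨H, hHS, hdisj, ?_⟩
  rw [← hunion, Finset.card_union_of_disjoint hdisj, Finset.card_neg, two_mul]

end Involution

theorem Finset.zero_notMem_of_even_card {α : Type*} [AddGroup α] [DecidableEq α] {S : Finset α}
    (hS : Even S.card) (hneg : ∀ x ∈ S, -x ∈ S) (hfix : ∀ x : α, -x = x → x = 0) :
    (0 : α) ∉ S := by
  intro h0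
  obtain ⟨H, -, -, hcard⟩ := (S.erase 0).exists_card_eq_two_mul
    (fun x hx => Finset.mem_erase.mpr
      ⟨neg_ne_zero.mpr (Finset.ne_of_mem_erase hx), hneg x (Finset.mem_of_mem_erase hx)⟩)
    (fun x hx h => Finset.ne_of_mem_erase hx (hfix x h))
  rw [Finset.card_erase_of_mem h0] at hcard
  have hpos := Finset.card_pos.mpr ⟨0, h0⟩
  obtain ⟨k, hk⟩ := hS
  omega

section PlusMinus

variable {α : Type*} {n : ℕ}

def plusMinus [Neg α] (lam : Fin n → α) (x : Fin n × Fin 2) : α :=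
  if x.2 = 0 then lam x.1 else -lam x.1

theorem plusMinus_add_one [InvolutiveNeg α] (lam : Fin n → α) (i : Fin n) (a : Fin 2) :
    plusMinus lam (i, a + 1) = -plusMinus lam (i, a) := by
  fin_cases a <;> simp [plusMinus]

theorem exists_injective_plusMinus_mem [InvolutiveNeg α] [DecidableEq α] (S : Finset α)
    (hS : S.card = 2 * n) (hneg : ∀ x ∈ S, -x ∈ S) (hfix : ∀ x ∈ S, -x ≠ x) :
    ∃ lam : Fin n → α, Injective (plusMinus lam) ∧ ∀ x, plusMinus lam x ∈ S := by
  obtain ⟨H, hHS, hdisj, hcard⟩ := S.exists_card_eq_two_mul hneg hfix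
  let e : H ≃ Fin n := H.equivFinOfCardEq (by omega)
  let lam : Fin n → α := fun i => e.symm i
  have hlamH : ∀ i, lam i ∈ H := fun i => (e.symm i).2
  have hlam_ne : ∀ i j, lam i ≠ -lam j := fun i j h =>
    Finset.disjoint_left.mp hdisj (hlamH i) (by rw [h, Finset.mem_neg', neg_neg]; exact hlamH j)
  have hlam_inj : Injective lam := fun i j h => e.symm.injective (Subtype.ext h)
  refine ⟨lam, ?_, ?_⟩
  · rintro ⟨i, a⟩ ⟨j, b⟩ h
    fin_cases a <;> fin_cases b <;>
      simp only [plusMinus, Fin.zero_eta, Fin.mk_one, Fin.isValue, ↓reduceIte, one_ne_zero,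
        zero_ne_one, neg_inj, Prod.mk.injEq, and_true, and_false] at h ⊢
    · exact hlam_inj h
    · exact hlam_ne i j h
    · exact hlam_ne j i h.symm
    · exact hlam_inj h
  · rintro ⟨i, a⟩
    fin_cases a
    · exact hHS (hlamH i)
    · exact hneg _ (hHS (hlamH i))

theorem plusMinus_add_ne_zero [AddGroup α] {lam : Fin n → α} (hinj : Injective (plusMinus lam))
    {i j : Fin n} (hij : i ≠ j) (a b : Fin 2) :
    plusMinus lam (i, a) + plusMinus lam (j, b) ≠ 0 := by
  intro h
  rw [add_eq_zero_iff_eq_neg, ← plusMinus_add_one] at h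
  exact hij congr($(hinj h).1)

end PlusMinus

theorem exists_injective_plusMinus_isRoot_charpoly {F : Type*} [Field F] [IsAlgClosed F]
    (hchar : ringChar F ≠ 2) {n : ℕ} {J A : Matrix (Fin n × Fin 2) (Fin n × Fin 2) F}
    (hJ : IsUnit J.det) (hJT : Jᵀ = -J) (hJA : (J * A)ᵀ = J * A)
    (hsep : A.charpoly.Separable) :
    ∃ lam : Fin n → F, Injective (plusMinus lam) ∧ ∀ x, A.charpoly.IsRoot (plusMinus lam x) := by
  classical
  set R := A.charpoly.roots.toFinset
  have hmem : ∀ r, r ∈ R ↔ A.charpoly.IsRoot r := fun r => by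
    rw [Multiset.mem_toFinset, mem_roots (charpoly_monic A).ne_zero]
  have hcard : R.card = 2 * n := by
    rw [Multiset.toFinset_card_of_nodup (nodup_roots hsep),
      ← (IsAlgClosed.splits _).natDegree_eq_card_roots, charpoly_natDegree_eq_dim,
      Fintype.card_prod, Fintype.card_fin, Fintype.card_fin, mul_comm]
  have hneg : ∀ r ∈ R, -r ∈ R := fun r hr =>
    (hmem _).mpr (isRoot_charpoly_neg hJ hJT hJA ((hmem r).mp hr))
  have hfix : ∀ r : F, -r = r → r = 0 := fun r h =>
    (mul_eq_zero.mp (by linear_combination -h : (2 : F) * r = 0)).resolve_left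
      (Ring.two_ne_zero hchar)
  have h0 : (0 : F) ∉ R := Finset.zero_notMem_of_even_card ⟨n, by omega⟩ hneg hfix
  obtain ⟨lam, hinj, hlam⟩ :=
    exists_injective_plusMinus_mem R hcard hneg fun r hr h => h0 (hfix r h ▸ hr)
  exact ⟨lam, hinj, fun x => (hmem _).mp (hlam x)⟩

theorem eigenbasis_of_separable_general
    (F : Type*) [Field F] [IsAlgClosed F] (hchar : ringChar F ≠ 2)
    (n : ℕ)
    (M : Matrix (Fin n × Fin 2) (Fin n × Fin 2) F) (hM : Mᵀ = M)
    (hsep : ((OmegaStd F n)⁻¹ * M).charpoly.Separable) :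
    ∃ (Ψ : Matrix (Fin n × Fin 2) (Fin n × Fin 2) F) (lam : Fin n → F),
      IsUnit Ψ.det ∧
      Ψ⁻¹ * ((OmegaStd F n)⁻¹ * M) * Ψ =
        Matrix.diagonal (fun x : Fin n × Fin 2 => if x.2 = 0 then lam x.1 else -lam x.1) ∧
      ∀ (i j : Fin n) (a b : Fin 2), i ≠ j → (Ψᵀ * OmegaStd F n * Ψ) (i, a) (j, b) = 0 := by
  set Ω := OmegaStd F n
  set A := Ω⁻¹ * M
  have hΩ : IsUnit Ω.det := isUnit_det_omegaStd F n
  have hΩA : Ω * A = M := mul_nonsing_inv_cancel_left Ω M hΩ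
  obtain ⟨lam, hinj, hroot⟩ := exists_injective_plusMinus_isRoot_charpoly hchar hΩ
    (omegaStd_transpose F n) (by rw [hΩA, hM]) hsep
  obtain ⟨Ψ, hΨ, hAΨ⟩ := exists_isUnit_det_mul_eq_mul_diagonal hinj hroot
  refine ⟨Ψ, lam, hΨ, by rw [mul_assoc, hAΨ, nonsing_inv_mul_cancel_left _ _ hΨ]; rfl,
    fun i j a b hij =>
      apply_eq_zero_of_mul_diagonal_symm ?_ ?_ (plusMinus_add_ne_zero hinj hij a b)⟩
  · rw [transpose_mul, transpose_mul, transpose_transpose, omegaStd_transpose, neg_mul, mul_neg,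
      mul_assoc]
  · rw [mul_assoc, ← hAΨ, ← mul_assoc, mul_assoc Ψᵀ, hΩA, transpose_mul, transpose_mul,
      transpose_transpose, hM, mul_assoc]

/-- Over an algebraically closed field of characteristic ≠ 2, if `A = Ω₀⁻¹ * M` has
pairwise distinct eigenvalues then it can be diagonalized with opposite eigenvalues
pairwise, by a basis in which `Ω₀` is block-diagonal with 2×2 blocks. -/
theorem eigenbasis_of_separable
    (F : Type*) [Field F] [IsAlgClosed F] (hchar : ringChar F ≠ 2)
    (n : ℕ) (hn : 0 < n)
    (M : Matrix (Fin n × Fin 2) (Fin n × Fin 2) F) (hM : Mᵀ = M)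
    (hsep : ((OmegaStd F n)⁻¹ * M).charpoly.Separable) :
    ∃ (Ψ : Matrix (Fin n × Fin 2) (Fin n × Fin 2) F) (lam : Fin n → F),
      IsUnit Ψ.det ∧
      Ψ⁻¹ * ((OmegaStd F n)⁻¹ * M) * Ψ =
        Matrix.diagonal (fun x : Fin n × Fin 2 => if x.2 = 0 then lam x.1 else -lam x.1) ∧
      ∀ (i j : Fin n) (a b : Fin 2), i ≠ j → (Ψᵀ * OmegaStd F n * Ψ) (i, a) (j, b) = 0 :=
  eigenbasis_of_separable_general F hchar n M hM hsep
end

section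
/- Let F be a field, let n be a positive integer, let M be a symmetric 2n×2n matrix over F, and set A = Ω₀⁻¹ * M. Then the characteristic polynomial of A equals the characteristic polynomial of -A (equivalently, det(X·I − A) = det(X·I + A), so the eigenvalues of A come in opposite pairs). -/
/-!
For a skew-symmetric `J` and a symmetric `M`, transposition and `charpoly_mul_comm` give
`χ(J M) = χ((J M)ᵀ) = χ(-(M J)) = χ(-(J M))`. The form `Ω₀` is skew-symmetric, hence so is `Ω₀⁻¹`.
-/

open Matrix

namespace Matrix

variable {m R : Type*} [Fintype m] [DecidableEq m] [CommRing R]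

theorem inv_neg (A : Matrix m m R) : (-A)⁻¹ = -A⁻¹ := by
  by_cases hA : IsUnit A.det
  · exact inv_eq_left_inv (by rw [neg_mul_neg, nonsing_inv_mul A hA])
  · have hnegA : ¬IsUnit (-A).det := by
      rw [det_neg, IsUnit.mul_iff, not_and_or]
      exact Or.inr hA
    rw [nonsing_inv_apply_not_isUnit _ hA, nonsing_inv_apply_not_isUnit _ hnegA, neg_zero]

theorem transpose_inv_of_transpose_eq_neg {A : Matrix m m R} (hA : Aᵀ = -A) :
    A⁻¹ᵀ = -A⁻¹ := by
  rw [transpose_nonsing_inv, hA, inv_neg]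

theorem charpoly_neg_mul_of_transpose_eq_neg {J M : Matrix m m R} (hJ : Jᵀ = -J) (hM : Mᵀ = M) :
    (-(J * M)).charpoly = (J * M).charpoly :=
  calc (-(J * M)).charpoly
      = (-M * J).charpoly := by rw [← charpoly_mul_comm, mul_neg]
    _ = ((J * M)ᵀ).charpoly := by rw [transpose_mul, hM, hJ, mul_neg, neg_mul]
    _ = (J * M).charpoly := charpoly_transpose _

end Matrix

theorem transpose_OmegaStd (F : Type*) [Ring F] (n : ℕ) : (OmegaStd F n)ᵀ = -OmegaStd F n := by
  ext ⟨i, a⟩ ⟨j, b⟩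
  rcases eq_or_ne i j with rfl | hij
  · fin_cases a <;> fin_cases b <;> simp [OmegaStd]
  · simp [OmegaStd, hij, hij.symm]

theorem charpoly_neg_of_symmetric_general
    (F : Type*) [Field F] (n : ℕ)
    (M : Matrix (Fin n × Fin 2) (Fin n × Fin 2) F) (hM : Mᵀ = M) :
    ((OmegaStd F n)⁻¹ * M).charpoly = (-((OmegaStd F n)⁻¹ * M)).charpoly :=
  (charpoly_neg_mul_of_transpose_eq_neg
    (transpose_inv_of_transpose_eq_neg (transpose_OmegaStd F n)) hM).symm

/-- The eigenvalues of `Ω₀⁻¹ * M` come in opposite pairs: the characteristic polynomial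
of `A = Ω₀⁻¹ * M` equals that of `-A`. -/
theorem charpoly_neg_of_symmetric
    (F : Type*) [Field F] (n : ℕ) (hn : 0 < n)
    (M : Matrix (Fin n × Fin 2) (Fin n × Fin 2) F) (hM : Mᵀ = M) :
    ((OmegaStd F n)⁻¹ * M).charpoly = (-((OmegaStd F n)⁻¹ * M)).charpoly :=
  charpoly_neg_of_symmetric_general F n M hM
end

section
/- Let F be a field of characteristic different from 2, let M be a symmetric 2×2 matrix over F, and let λ ∈ F with λ ≠ 0 be such that the characteristic polynomial of Ω₀⁻¹ * M equals X² − C(λ²). Then there exists a symplectic matrix S over F with Sᵀ * M * S = !![0, λ; λ, 0]. -/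
/-!
The matrix `N = Ω₀⁻¹ * M` has the two distinct eigenvalues `±λ`, so `N * S = S * diag(-λ, λ)` for an
invertible `S`, which may be rescaled to `det S = 1`. For `2 × 2` matrices `Sᵀ * Ω₀ * S = det S • Ω₀`,
so `S` is symplectic, and `Sᵀ * M * S = Sᵀ * Ω₀ * N * S = Sᵀ * Ω₀ * S * diag(-λ, λ) = Ω₀ * diag(-λ, λ)`,
which is the hyperbolic form.
-/

open Matrix Polynomial

def Omega2 (F : Type*) [Zero F] [One F] [Neg F] : Matrix (Fin 2) (Fin 2) F :=
  !![0, 1; -1, 0]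

section CommRing

variable {R : Type*} [CommRing R]

theorem det_Omega2 : (Omega2 R).det = 1 := by
  simp [Omega2, det_fin_two_of]

theorem transpose_mul_Omega2_mul (S : Matrix (Fin 2) (Fin 2) R) :
    Sᵀ * Omega2 R * S = S.det • Omega2 R := by
  ext i j
  fin_cases i <;> fin_cases j <;>
    simp [Omega2, det_fin_two, mul_apply, Fin.sum_univ_two] <;> ring

theorem Omega2_mul_diagonal (a b : R) : Omega2 R * diagonal ![a, b] = !![0, b; -a, 0] := by
  ext i j
  fin_cases i <;> fin_cases j <;> simp [Omega2]

end CommRing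

theorem Matrix.exists_det_ne_zero_mul_eq_mul_diagonal {K n : Type*} [Field K] [Fintype n]
    [DecidableEq n] (A : Matrix n n K) (μ : n → K) (hμ : Function.Injective μ)
    (hroot : ∀ i, A.charpoly.IsRoot (μ i)) :
    ∃ S : Matrix n n K, S.det ≠ 0 ∧ A * S = S * diagonal μ := by
  have hev : ∀ i, ∃ v, Module.End.HasEigenvector (toLin' A) (μ i) v := fun i =>
    ((Module.End.hasEigenvalue_iff_isRoot_charpoly _ _).2
      (by rw [charpoly_toLin']; exact hroot i)).exists_hasEigenvector
  choose v hv using hev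
  refine ⟨(of v)ᵀ, ?_, ?_⟩
  · have hindep : LinearIndependent K (of v)ᵀ.col :=
      Module.End.eigenvectors_linearIndependent' (toLin' A) μ hμ v hv
    exact (isUnit_iff_isUnit_det _).1 (linearIndependent_cols_iff_isUnit.1 hindep) |>.ne_zero
  · ext k i
    have := congrFun (Module.End.mem_eigenspace_iff.1 (hv i).1) k
    simp only [toLin'_apply] at this
    rw [mul_diagonal]
    simpa [mul_apply, mulVec, dotProduct, mul_comm] using this

theorem Matrix.exists_det_eq_one_mul_eq_mul_diagonal_fin_two {K : Type*} [Field K]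
    (A : Matrix (Fin 2) (Fin 2) K) {a b : K} (hab : a ≠ b)
    (ha : A.charpoly.IsRoot a) (hb : A.charpoly.IsRoot b) :
    ∃ S : Matrix (Fin 2) (Fin 2) K, S.det = 1 ∧ A * S = S * diagonal ![a, b] := by
  have hinj : Function.Injective ![a, b] := by
    intro i j h
    fin_cases i <;> fin_cases j <;> simp_all [eq_comm]
  obtain ⟨S, hdet, hS⟩ :=
    A.exists_det_ne_zero_mul_eq_mul_diagonal ![a, b] hinj (Fin.forall_fin_two.2 ⟨ha, hb⟩)
  refine ⟨S * diagonal ![S.det⁻¹, 1], by simp [det_diagonal, hdet], ?_⟩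
  rw [← mul_assoc, hS, mul_assoc, (commute_diagonal _ _).eq, mul_assoc]

theorem hyperbolic_normal_form_general
    (F : Type*) [Field F] (hchar : ringChar F ≠ 2)
    (M : Matrix (Fin 2) (Fin 2) F)
    (lam : F) (hlam : lam ≠ 0)
    (hchp : ((Omega2 F)⁻¹ * M).charpoly = X ^ 2 - C (lam ^ 2)) :
    ∃ S : Matrix (Fin 2) (Fin 2) F,
      Sᵀ * Omega2 F * S = Omega2 F ∧ Sᵀ * M * S = !![0, lam; lam, 0] := by
  set N := (Omega2 F)⁻¹ * M
  have hM : M = Omega2 F * N :=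
    (mul_nonsing_inv_cancel_left (A := Omega2 F) M (by simp [det_Omega2])).symm
  have hroot : ∀ μ, μ ^ 2 = lam ^ 2 → N.charpoly.IsRoot μ := fun μ hμ => by simp [hchp, hμ]
  have hne : -lam ≠ lam := fun h => hlam <|
    (mul_eq_zero.1 (by linear_combination -h : (2 : F) * lam = 0)).resolve_left
      (Ring.two_ne_zero hchar)
  obtain ⟨S, hdet, hNS⟩ := exists_det_eq_one_mul_eq_mul_diagonal_fin_two N hne
    (hroot _ (neg_sq lam)) (hroot _ rfl)
  have hsymp : Sᵀ * Omega2 F * S = Omega2 F := by rw [transpose_mul_Omega2_mul, hdet, one_smul]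
  refine ⟨S, hsymp, ?_⟩
  calc Sᵀ * M * S = Sᵀ * Omega2 F * S * diagonal ![-lam, lam] := by
        rw [hM, mul_assoc, mul_assoc, hNS, ← mul_assoc, ← mul_assoc, mul_assoc Sᵀ]
    _ = !![0, lam; lam, 0] := by rw [hsymp, Omega2_mul_diagonal, neg_neg]

/-- If the eigenvalues `±λ` of `Ω₀⁻¹ * M` lie in the base field and are nonzero,
then `M` is symplectically equivalent to the hyperbolic normal form `!![0, λ; λ, 0]`. -/
theorem hyperbolic_normal_form
    (F : Type*) [Field F] (hchar : ringChar F ≠ 2)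
    (M : Matrix (Fin 2) (Fin 2) F) (hM : Mᵀ = M)
    (lam : F) (hlam : lam ≠ 0)
    (hchp : ((Omega2 F)⁻¹ * M).charpoly = X ^ 2 - C (lam ^ 2)) :
    ∃ S : Matrix (Fin 2) (Fin 2) F,
      Sᵀ * Omega2 F * S = Omega2 F ∧ Sᵀ * M * S = !![0, lam; lam, 0] :=
  hyperbolic_normal_form_general F hchar M lam hlam hchp
end

section
/- Let F be a field of characteristic different from 2, let c ∈ F be a non-square, and let r, s ∈ F with r ≠ 0 and s ≠ 0. Let M be a symmetric 4×4 matrix over F such that the characteristic polynomial of Ω₀⁻¹ * M equals X⁴ − C(2*(s² + c*r²))*X² + C((s² − c*r²)²). Then there exists a symplectic matrix S over F such that Sᵀ * M * S = !![0, s, 0, r; s, 0, c*r, 0; 0, c*r, 0, s; r, 0, s, 0]. -/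
open Matrix Polynomial

/-- The standard symplectic 4×4 matrix. -/
def Omega4 (F : Type*) [Zero F] [One F] [Neg F] : Matrix (Fin 4) (Fin 4) F :=
  !![0, 1, 0, 0; -1, 0, 0, 0; 0, 0, 0, 1; 0, 0, -1, 0]

/-!
Put `A = Ω₀⁻¹ M` and `ω(u, v) = uᵀ Ω₀ v`; symmetry of `M` makes `A` skew-adjoint for `ω`.
With `d = s² - c r²` the characteristic polynomial of `A` is `q₊ q₋`, `q_± = X² ∓ 2 s X + d`,
and `q₊`, `q₋` are coprime, so by Cayley–Hamilton `F⁴ = ker q₊(A) ⊕ ker q₋(A)`. Both kernels are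
`ω`-isotropic: for `u, w` in one of them, moving `A` across `ω(A u, A w)` to the left or to the
right gives `4 s ω(u, A w) = 0`, and then `d ω(u, w) = 0`. Hence `ω` pairs the two kernels, and we
find `y ∈ ker q₊(A)`, `x ∈ ker q₋(A)` with `ω(x, y) = 0` and `ω(x, A y) = r`; this last step needs
`(a - s)² - c r² ≠ 0` for all `a`, which is where `c` being a non-square enters. In the basis
`x, (A y - s y)/r, -(A x + s x)/r, y` the form `ω` is `Ω₀` and `A` is `Ω₀⁻¹ N`, `N` the normal form.
-/

namespace FocusFocus

variable {F : Type*} [Field F]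

noncomputable def quadPoly (t d : F) : F[X] := X ^ 2 - C (2 * t) * X + C d

theorem quadPoly_mul_quadPoly_neg (t d : F) :
    quadPoly t d * quadPoly (-t) d = X ^ 4 - C (4 * t ^ 2 - 2 * d) * X ^ 2 + C (d ^ 2) := by
  simp only [quadPoly, map_sub, map_mul, map_neg, map_pow, map_ofNat]
  ring

theorem isCoprime_quadPoly_neg {t d : F} (h2 : (2 : F) ≠ 0) (ht : t ≠ 0) (hd : d ≠ 0) :
    IsCoprime (quadPoly t d) (quadPoly (-t) d) := by
  have h4 : (4 : F) ≠ 0 := by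
    rw [show (4 : F) = 2 * 2 by norm_num]; exact mul_ne_zero h2 h2
  refine ⟨C d⁻¹ + C (4 * t * d)⁻¹ * (X - C (2 * t)), -(C (4 * t * d)⁻¹ * (X - C (2 * t))), ?_⟩
  have hinv : C d⁻¹ * C d = 1 := by rw [← map_mul, inv_mul_cancel₀ hd, map_one]
  have hinv' : C (4 * t * d)⁻¹ * C (4 * t) = C d⁻¹ := by
    rw [← map_mul]; congr 1; field_simp
  simp only [quadPoly, map_neg, map_mul, map_ofNat] at hinv' ⊢
  linear_combination hinv - X * (X - 2 * C t) * hinv'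

theorem sq_sub_mul_sq_ne_zero {c r : F} (hc : ¬IsSquare c) (hr : r ≠ 0) (a : F) :
    a ^ 2 - c * r ^ 2 ≠ 0 := by
  intro h
  refine hc ⟨a / r, ?_⟩
  field_simp
  linear_combination -h

section Module

variable {V : Type*} [AddCommGroup V] [Module F V] {B : LinearMap.BilinForm F V}

theorem exists_mem_mem_apply_eq_one_of_sup_eq_top [Nontrivial V] (hB : B.SeparatingRight)
    {W₁ W₂ : Submodule F V} (hW : W₁ ⊔ W₂ = ⊤)
    (h₁ : ∀ u ∈ W₁, ∀ w ∈ W₁, B u w = 0) (h₂ : ∀ u ∈ W₂, ∀ w ∈ W₂, B u w = 0) :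
    ∃ y ∈ W₁, ∃ x ∈ W₂, B x y = 1 := by
  obtain ⟨y, hyW, hy⟩ : ∃ y ∈ W₁, y ≠ 0 := by
    refine (Submodule.ne_bot_iff W₁).mp fun hbot => ?_
    rw [hbot, bot_sup_eq] at hW
    obtain ⟨v, hv⟩ := exists_ne (0 : V)
    exact hv (hB v fun x => h₂ x (hW ▸ Submodule.mem_top) v (hW ▸ Submodule.mem_top))
  obtain ⟨z, hz⟩ : ∃ z, B z y ≠ 0 := by
    by_contra! h
    exact hy (hB y h)
  obtain ⟨z₁, hz₁, z₂, hz₂, rfl⟩ := Submodule.mem_sup.mp (hW ▸ Submodule.mem_top : z ∈ W₁ ⊔ W₂)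
  rw [map_add, LinearMap.add_apply, h₁ z₁ hz₁ y hyW, zero_add] at hz
  exact ⟨y, hyW, (B z₂ y)⁻¹ • z₂, Submodule.smul_mem _ _ hz₂, by
    rw [map_smul, LinearMap.smul_apply, smul_eq_mul, inv_mul_cancel₀ hz]⟩

variable {A : Module.End F V} {t d : F}

theorem mem_ker_aeval_quadPoly {x : V} :
    x ∈ LinearMap.ker (aeval A (quadPoly t d)) ↔ A (A x) = (2 * t) • A x - d • x := by
  simp only [quadPoly, LinearMap.mem_ker, map_add, map_sub, map_mul, aeval_X, aeval_C,
    LinearMap.add_apply, LinearMap.sub_apply, pow_two, Module.End.mul_apply,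
    Module.algebraMap_end_apply]
  constructor <;> intro h <;> linear_combination (norm := module) h

theorem map_mem_ker_aeval {p : F[X]} {x : V} (hx : x ∈ LinearMap.ker (aeval A p)) :
    A x ∈ LinearMap.ker (aeval A p) := by
  have hcomm : aeval A p * A = A * aeval A p := by
    simpa only [map_mul, aeval_X] using congrArg (aeval A) (mul_comm p X)
  rw [LinearMap.mem_ker] at hx ⊢
  rw [← Module.End.mul_apply, hcomm, Module.End.mul_apply, hx, map_zero]

theorem ker_quadPoly_sup_ker_quadPoly_neg (h2 : (2 : F) ≠ 0) (ht : t ≠ 0) (hd : d ≠ 0)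
    (hA : aeval A (quadPoly t d * quadPoly (-t) d) = 0) :
    LinearMap.ker (aeval A (quadPoly t d)) ⊔ LinearMap.ker (aeval A (quadPoly (-t) d)) = ⊤ := by
  rw [sup_ker_aeval_eq_ker_aeval_mul_of_coprime A (isCoprime_quadPoly_neg h2 ht hd), hA,
    LinearMap.ker_zero]

theorem apply_map_eq_zero_of_mem_ker_quadPoly (hA : LinearMap.IsAdjointPair B B A (-A))
    (h2 : (2 : F) ≠ 0) (ht : t ≠ 0) {u w : V} (hu : u ∈ LinearMap.ker (aeval A (quadPoly t d)))
    (hw : w ∈ LinearMap.ker (aeval A (quadPoly t d))) : B u (A w) = 0 := by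
  have hA' : ∀ x y, B (A x) y = -B x (A y) := fun x y => by simpa using hA x y
  rw [mem_ker_aeval_quadPoly] at hu hw
  have h₁ : B (A u) (A w) = -(2 * t) * B u (A w) + d * B u w := by
    rw [hA', hw, map_sub, map_smul, map_smul, smul_eq_mul, smul_eq_mul]; ring
  have h₂ : B (A u) (A w) = 2 * t * B u (A w) + d * B u w := by
    have := hA' (A u) w
    rw [hu, map_sub, map_smul, map_smul, LinearMap.sub_apply, LinearMap.smul_apply,
      LinearMap.smul_apply, smul_eq_mul, smul_eq_mul, hA'] at this
    linear_combination this
  have h4t : 2 * 2 * t ≠ 0 := mul_ne_zero (mul_ne_zero h2 h2) ht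
  have : 2 * 2 * t * B u (A w) = 0 := by linear_combination h₁ - h₂
  exact (mul_eq_zero.mp this).resolve_left h4t

theorem apply_eq_zero_of_mem_ker_quadPoly (hA : LinearMap.IsAdjointPair B B A (-A))
    (h2 : (2 : F) ≠ 0) (ht : t ≠ 0) (hd : d ≠ 0) {u w : V}
    (hu : u ∈ LinearMap.ker (aeval A (quadPoly t d)))
    (hw : w ∈ LinearMap.ker (aeval A (quadPoly t d))) : B u w = 0 := by
  have h₀ := apply_map_eq_zero_of_mem_ker_quadPoly hA h2 ht hu (map_mem_ker_aeval hw)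
  rw [mem_ker_aeval_quadPoly.mp hw, map_sub, map_smul, map_smul, smul_eq_mul, smul_eq_mul,
    apply_map_eq_zero_of_mem_ker_quadPoly hA h2 ht hu hw, mul_zero, zero_sub, neg_eq_zero] at h₀
  exact (mul_eq_zero.mp h₀).resolve_left hd

theorem exists_mem_ker_quadPoly_neg_apply_eq {c r s : F} (hA : LinearMap.IsAdjointPair B B A (-A))
    (hc : ¬IsSquare c) (hr : r ≠ 0) {x₀ y : V}
    (hx₀ : x₀ ∈ LinearMap.ker (aeval A (quadPoly (-s) (s ^ 2 - c * r ^ 2))))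
    (hy : y ∈ LinearMap.ker (aeval A (quadPoly s (s ^ 2 - c * r ^ 2)))) (h₁ : B x₀ y = 1) :
    ∃ x ∈ LinearMap.ker (aeval A (quadPoly (-s) (s ^ 2 - c * r ^ 2))),
      B x y = 0 ∧ B x (A y) = r := by
  have hA' : ∀ x y, B (A x) y = -B x (A y) := fun x y => by simpa using hA x y
  have hD := sq_sub_mul_sq_ne_zero hc hr (B x₀ (A y) - s)
  refine ⟨(r / ((B x₀ (A y) - s) ^ 2 - c * r ^ 2)) • (B x₀ (A y) • x₀ + A x₀), ?_, ?_, ?_⟩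
  · exact Submodule.smul_mem _ _ (add_mem (Submodule.smul_mem _ _ hx₀) (map_mem_ker_aeval hx₀))
  · simp only [map_smul, map_add, LinearMap.smul_apply, LinearMap.add_apply, smul_eq_mul, hA', h₁]
    ring
  · simp only [map_smul, map_add, LinearMap.smul_apply, LinearMap.add_apply, smul_eq_mul, hA',
      mem_ker_aeval_quadPoly.mp hy, map_sub, h₁]
    rw [div_mul_eq_mul_div, div_eq_iff hD]
    ring

end Module

section Matrix

variable {n : Type*} [Fintype n]

theorem of_mul_mul_transpose_apply (e : n → n → F) (N : Matrix n n F) (i j : n) :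
    (of e * N * (of e)ᵀ) i j = e i ⬝ᵥ N *ᵥ e j :=
  mul_mul_apply _ _ _ i j

theorem mul_transpose_of_apply (N : Matrix n n F) (e : n → n → F) (i j : n) :
    (N * (of e)ᵀ) i j = (N *ᵥ e j) i :=
  rfl

variable [DecidableEq n] {J : Matrix n n F}

theorem toLinearMap₂'_apply_swap_of_transpose_eq_neg (hJ : Jᵀ = -J) (u v : n → F) :
    toLinearMap₂' F J u v = -toLinearMap₂' F J v u := by
  rw [toLinearMap₂'_apply', toLinearMap₂'_apply', dotProduct_comm, ← vecMul_transpose,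
    ← dotProduct_mulVec, hJ, neg_mulVec, dotProduct_neg]

theorem isSkewAdjoint_inv_mul (hJ : Jᵀ = -J) (hJJ : J * J = -1) {M : Matrix n n F}
    (hM : Mᵀ = M) : J.IsSkewAdjoint (J⁻¹ * M) := by
  have hJinv : J⁻¹ = -J := inv_eq_left_inv (by rw [neg_mul, hJJ, neg_neg])
  rw [Matrix.IsSkewAdjoint, Matrix.IsAdjointPair, hJinv, transpose_mul, transpose_neg, hJ, hM]
  simp only [neg_mul, mul_neg, neg_neg, Matrix.mul_assoc, hJJ, ← Matrix.mul_assoc J J, mul_one,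
    one_mul]

theorem isAdjointPair_toLin'_of_isSkewAdjoint {A : Matrix n n F} (hA : J.IsSkewAdjoint A) :
    LinearMap.IsAdjointPair (toLinearMap₂' F J) (toLinearMap₂' F J) (toLin' A) (-toLin' A) := by
  rwa [← LinearMap.coe_neg, ← map_neg, isAdjointPair_toLinearMap₂']

theorem aeval_toLin'_quadPoly_mul_quadPoly_neg {A : Matrix n n F} {c r s : F}
    (hA : A.charpoly =
      X ^ 4 - C (2 * (s ^ 2 + c * r ^ 2)) * X ^ 2 + C ((s ^ 2 - c * r ^ 2) ^ 2)) :
    aeval (toLin' A) (quadPoly s (s ^ 2 - c * r ^ 2) * quadPoly (-s) (s ^ 2 - c * r ^ 2)) = 0 := by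
  rw [quadPoly_mul_quadPoly_neg, show 4 * s ^ 2 - 2 * (s ^ 2 - c * r ^ 2) = 2 * (s ^ 2 + c * r ^ 2)
    by ring, ← hA, ← charpoly_toLin', LinearMap.aeval_self_charpoly]

end Matrix

theorem omega_transpose : (Omega4 F)ᵀ = -Omega4 F := by
  ext i j; fin_cases i <;> fin_cases j <;> simp [Omega4]

theorem omega_mul_omega : Omega4 F * Omega4 F = -1 := by
  ext i j; fin_cases i <;> fin_cases j <;> simp [Omega4, mul_apply, Fin.sum_univ_four]

theorem isUnit_det_omega : IsUnit (Omega4 F).det :=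
  isUnit_det_of_left_inverse (B := -Omega4 F) (by rw [neg_mul, omega_mul_omega, neg_neg])

def focusFocusHamiltonian (c r s : F) : Matrix (Fin 4) (Fin 4) F :=
  !![-s, 0, -(c * r), 0; 0, s, 0, r; -r, 0, -s, 0; 0, c * r, 0, s]

theorem omega_mul_focusFocusHamiltonian (c r s : F) :
    Omega4 F * focusFocusHamiltonian c r s =
      !![0, s, 0, r; s, 0, c * r, 0; 0, c * r, 0, s; r, 0, s, 0] := by
  ext i j; fin_cases i <;> fin_cases j <;>
    simp [Omega4, focusFocusHamiltonian, mul_apply, Fin.sum_univ_four]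

local notation "ω" => toLinearMap₂' F (Omega4 F)

def focusFocusBasis (A : Matrix (Fin 4) (Fin 4) F) (r s : F) (x y : Fin 4 → F) :
    Matrix (Fin 4) (Fin 4) F :=
  (of ![x, r⁻¹ • (A *ᵥ y - s • y), -(r⁻¹ • (A *ᵥ x + s • x)), y])ᵀ

theorem focusFocusBasis_symplectic {A : Matrix (Fin 4) (Fin 4) F}
    (hA : (Omega4 F).IsSkewAdjoint A) {r s d : F} (h2 : (2 : F) ≠ 0) (hs : s ≠ 0) (hd : d ≠ 0)
    (hr : r ≠ 0) {x y : Fin 4 → F}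
    (hx : x ∈ LinearMap.ker (aeval (toLin' A) (quadPoly (-s) d)))
    (hy : y ∈ LinearMap.ker (aeval (toLin' A) (quadPoly s d)))
    (hxy : ω x y = 0) (hxAy : ω x (A *ᵥ y) = r) :
    (focusFocusBasis A r s x y)ᵀ * Omega4 F * focusFocusBasis A r s x y = Omega4 F := by
  have hA' := isAdjointPair_toLin'_of_isSkewAdjoint hA
  have hskew := toLinearMap₂'_apply_swap_of_transpose_eq_neg (omega_transpose (F := F))
  have hAx : A *ᵥ x ∈ LinearMap.ker (aeval (toLin' A) (quadPoly (-s) d)) := map_mem_ker_aeval hx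
  have hAy : A *ᵥ y ∈ LinearMap.ker (aeval (toLin' A) (quadPoly s d)) := map_mem_ker_aeval hy
  have isoNeg := fun {u w} =>
    apply_eq_zero_of_mem_ker_quadPoly (u := u) (w := w) hA' h2 (neg_ne_zero.mpr hs) hd
  have isoPos := fun {u w} =>
    apply_eq_zero_of_mem_ker_quadPoly (u := u) (w := w) hA' h2 hs hd
  have hAxy : ω (A *ᵥ x) y = -r := by simpa [hxAy] using hA' x y
  have hAxAy : ω (A *ᵥ x) (A *ᵥ y) = -(2 * s * r) := by
    have hAAy : A *ᵥ (A *ᵥ y) = (2 * s) • (A *ᵥ y) - d • y := mem_ker_aeval_quadPoly.mp hy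
    simpa [hAAy, hxAy, hxy] using hA' x (A *ᵥ y)
  ext i j
  rw [focusFocusBasis, transpose_transpose, of_mul_mul_transpose_apply, ← toLinearMap₂'_apply']
  fin_cases i <;> fin_cases j <;>
    simp only [Fin.reduceFinMk, Fin.isValue, cons_val, map_add, map_neg, map_smul, map_sub,
      LinearMap.add_apply, LinearMap.sub_apply, LinearMap.neg_apply, LinearMap.smul_apply,
      smul_eq_mul, isoNeg hx hx, isoNeg hx hAx, isoNeg hAx hx, isoNeg hAx hAx, isoPos hy hy,
      isoPos hy hAy, isoPos hAy hy, isoPos hAy hAy, hxy, hxAy, hAxy, hAxAy, hskew y x,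
      hskew (A *ᵥ y) x, hskew y (A *ᵥ x), hskew (A *ᵥ y) (A *ᵥ x)] <;>
    simp only [Omega4, of_apply, cons_val] <;> (try field_simp) <;> ring

theorem mul_focusFocusBasis {A : Matrix (Fin 4) (Fin 4) F} {c r s : F} (hr : r ≠ 0)
    {x y : Fin 4 → F}
    (hx : x ∈ LinearMap.ker (aeval (toLin' A) (quadPoly (-s) (s ^ 2 - c * r ^ 2))))
    (hy : y ∈ LinearMap.ker (aeval (toLin' A) (quadPoly s (s ^ 2 - c * r ^ 2)))) :
    A * focusFocusBasis A r s x y =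
      focusFocusBasis A r s x y * focusFocusHamiltonian c r s := by
  have hAAx : A *ᵥ (A *ᵥ x) = (2 * -s) • (A *ᵥ x) - (s ^ 2 - c * r ^ 2) • x :=
    mem_ker_aeval_quadPoly.mp hx
  have hAAy : A *ᵥ (A *ᵥ y) = (2 * s) • (A *ᵥ y) - (s ^ 2 - c * r ^ 2) • y :=
    mem_ker_aeval_quadPoly.mp hy
  ext k j
  rw [focusFocusBasis, focusFocusHamiltonian, mul_transpose_of_apply, mul_apply]
  fin_cases j <;>
    simp only [Fin.reduceFinMk, Fin.isValue, cons_val, transpose_apply, of_apply,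
      Fin.sum_univ_four, mulVec_add, mulVec_sub, mulVec_neg, mulVec_smul, hAAx, hAAy, Pi.add_apply,
      Pi.sub_apply, Pi.neg_apply, Pi.smul_apply, smul_eq_mul] <;>
    field_simp <;> ring

end FocusFocus

open FocusFocus in
/-- Focus-focus normal form: if the eigenvalues of `Ω₀⁻¹ * M` are `±s ± r√c` with `c`
a non-square (encoded by the stated characteristic polynomial), then `M` is
symplectically equivalent to the focus-focus block. -/
theorem focus_focus_normal_form
    (F : Type*) [Field F] (hchar : ringChar F ≠ 2)
    (c r s : F) (hc : ¬ IsSquare c) (hr : r ≠ 0) (hs : s ≠ 0)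
    (M : Matrix (Fin 4) (Fin 4) F) (hM : Mᵀ = M)
    (hchp : ((Omega4 F)⁻¹ * M).charpoly =
      X ^ 4 - C (2 * (s ^ 2 + c * r ^ 2)) * X ^ 2 + C ((s ^ 2 - c * r ^ 2) ^ 2)) :
    ∃ S : Matrix (Fin 4) (Fin 4) F,
      Sᵀ * Omega4 F * S = Omega4 F ∧
      Sᵀ * M * S = !![0, s, 0, r; s, 0, c * r, 0; 0, c * r, 0, s; r, 0, s, 0] := by
  have h2 : (2 : F) ≠ 0 := Ring.two_ne_zero hchar
  have hd := sq_sub_mul_sq_ne_zero hc hr s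
  set A := (Omega4 F)⁻¹ * M
  have hMA : M = Omega4 F * A := by
    rw [← Matrix.mul_assoc, mul_nonsing_inv _ isUnit_det_omega, Matrix.one_mul]
  have hA : (Omega4 F).IsSkewAdjoint A := isSkewAdjoint_inv_mul omega_transpose omega_mul_omega hM
  have hA' := isAdjointPair_toLin'_of_isSkewAdjoint hA
  obtain ⟨y, hy, x₀, hx₀, h₁⟩ := exists_mem_mem_apply_eq_one_of_sup_eq_top
    (LinearMap.separatingRight_toLinearMap₂'_of_det_ne_zero' isUnit_det_omega.ne_zero)
    (ker_quadPoly_sup_ker_quadPoly_neg h2 hs hd (aeval_toLin'_quadPoly_mul_quadPoly_neg hchp))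
    (fun u hu w hw => apply_eq_zero_of_mem_ker_quadPoly hA' h2 hs hd hu hw)
    (fun u hu w hw => apply_eq_zero_of_mem_ker_quadPoly hA' h2 (neg_ne_zero.mpr hs) hd hu hw)
  obtain ⟨x, hx, hxy, hxAy⟩ := exists_mem_ker_quadPoly_neg_apply_eq hA' hc hr hx₀ hy h₁
  set S := focusFocusBasis A r s x y
  have hS : Sᵀ * Omega4 F * S = Omega4 F := focusFocusBasis_symplectic hA h2 hs hd hr hx hy hxy hxAy
  have hAS : A * S = S * focusFocusHamiltonian c r s := mul_focusFocusBasis hr hx hy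
  refine ⟨S, hS, ?_⟩
  calc Sᵀ * M * S = Sᵀ * Omega4 F * (A * S) := by rw [hMA]; simp only [Matrix.mul_assoc]
    _ = Sᵀ * Omega4 F * S * focusFocusHamiltonian c r s := by rw [hAS]; simp only [Matrix.mul_assoc]
    _ = _ := by rw [hS, omega_mul_focusFocusHamiltonian]
end

section
/- Let u ∈ ℚ₂ with u ≠ 0. Then there exist x, y ∈ ℚ₂ with u = x² + 3·y² if and only if the 2-adic valuation of u is even. -/
/-!
With `a = x + y` and `b = 2y` one has `x² + 3y² = a² - ab + b²`, the norm form of the unramified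
extension `ℤ₂[ω]`. Since `t² - t + 1` has no root modulo `2`,
`‖a² - ab + b²‖ = max ‖a‖ ‖b‖ ^ 2`, so every nonzero value of the form has even valuation.

Conversely, after dividing by a square we may assume that `u` is a unit. Every unit of `ℤ/8`
is of the form `x₀² + 3y₀²` and is its own inverse, so `u * c ≡ 1 [mod 8]` for some
`c = x₀² + 3y₀²`; by Hensel's lemma `u * c = s²`, and `u = c * (s / c)²`.
-/

open PadicInt

theorem PadicInt.norm_mul_sub_one_lt_one (s : ℤ_[2]) : ‖s * (s - 1)‖ < 1 := by
  rw [← mem_nonunits, ← IsLocalRing.mem_maximalIdeal, ← ker_toZMod, RingHom.mem_ker, map_mul,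
    map_sub, map_one]
  generalize toZMod s = σ
  revert σ
  decide

theorem Padic.norm_sq_sub_self_add_one {s : ℚ_[2]} (hs : ‖s‖ ≤ 1) : ‖s ^ 2 - s + 1‖ = 1 := by
  have h : ‖s * (s - 1)‖ < ‖(1 : ℚ_[2])‖ := by
    rw [norm_one]
    exact PadicInt.norm_mul_sub_one_lt_one ⟨s, hs⟩
  rw [show s ^ 2 - s + 1 = s * (s - 1) + 1 by ring,
    IsUltrametricDist.norm_add_eq_max_of_norm_ne_norm h.ne, max_eq_right h.le, norm_one]

theorem Padic.norm_sq_sub_mul_add_sq (a b : ℚ_[2]) :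
    ‖a ^ 2 - a * b + b ^ 2‖ = max ‖a‖ ‖b‖ ^ 2 := by
  wlog hab : ‖a‖ ≤ ‖b‖ generalizing a b
  · rw [max_comm, ← this b a (le_of_not_ge hab)]
    ring_nf
  rcases eq_or_ne b 0 with rfl | hb
  · simp_all
  have hs : ‖a / b‖ ≤ 1 := by
    rw [norm_div]
    exact div_le_one_of_le₀ hab (norm_nonneg b)
  rw [show a ^ 2 - a * b + b ^ 2 = b ^ 2 * ((a / b) ^ 2 - a / b + 1) by field_simp,
    norm_mul, norm_sq_sub_self_add_one hs, max_eq_right hab, norm_pow, mul_one]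

theorem Padic.valuation_eq_of_norm_eq {p : ℕ} [Fact p.Prime] {x y : ℚ_[p]} (hx : x ≠ 0)
    (hy : y ≠ 0) (h : ‖x‖ = ‖y‖) : x.valuation = y.valuation := by
  have hp : 1 < (p : ℝ) := mod_cast (Fact.out : p.Prime).one_lt
  rwa [norm_eq_zpow_neg_valuation hx, norm_eq_zpow_neg_valuation hy,
    zpow_right_inj₀ (by positivity) hp.ne', neg_inj] at h

theorem Padic.even_valuation_of_norm_eq_sq {p : ℕ} [Fact p.Prime] {u c : ℚ_[p]} (hu : u ≠ 0)
    (h : ‖u‖ = ‖c‖ ^ 2) : Even u.valuation := by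
  rw [← norm_pow] at h
  have hc : c ^ 2 ≠ 0 := norm_ne_zero_iff.1 (h ▸ norm_ne_zero_iff.2 hu)
  rw [valuation_eq_of_norm_eq hu hc h, valuation_pow, Nat.cast_ofNat]
  exact even_two_mul _

theorem Padic.exists_eq_sq_mul_of_even_valuation {p : ℕ} [Fact p.Prime] {u : ℚ_[p]} (hu : u ≠ 0)
    (h : Even u.valuation) : ∃ c w : ℚ_[p], ‖w‖ = 1 ∧ u = c ^ 2 * w := by
  obtain ⟨k, hk⟩ := h
  have hp : (p : ℚ_[p]) ≠ 0 := mod_cast (Fact.out : p.Prime).ne_zero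
  refine ⟨(p : ℚ_[p]) ^ k, u / ((p : ℚ_[p]) ^ k) ^ 2, ?_, by field_simp⟩
  have hp' : (p : ℝ) ≠ 0 := mod_cast (Fact.out : p.Prime).ne_zero
  rw [norm_div, norm_pow, norm_p_zpow, norm_eq_zpow_neg_valuation hu, hk, ← zpow_natCast,
    ← zpow_mul, show -k * ((2 : ℕ) : ℤ) = -(k + k) by push_cast; ring,
    div_self (zpow_ne_zero _ hp')]

theorem PadicInt.isSquare_of_toZModPow_three_eq_one {z : ℤ_[2]} (h : toZModPow 3 z = 1) :
    IsSquare z := by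
  have hz : ‖z - 1‖ ≤ 1 / 8 := by
    have := (norm_le_pow_iff_mem_span_pow (z - 1) 3).2 <| by
      rw [← ker_toZModPow, RingHom.mem_ker, map_sub, h, map_one, sub_self]
    norm_num at this
    exact this
  have hnorm : ‖(Polynomial.X ^ 2 - Polynomial.C z).aeval (1 : ℤ_[2])‖ <
      ‖(Polynomial.X ^ 2 - Polynomial.C z).derivative.aeval (1 : ℤ_[2])‖ ^ 2 := by
    have h2 : ‖(2 : ℤ_[2])‖ = 2⁻¹ := by simpa using norm_p (p := 2)
    simp only [map_sub, map_pow, Polynomial.aeval_X, Polynomial.aeval_C, one_pow,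
      Polynomial.derivative_X_pow, Polynomial.derivative_C]
    rw [norm_sub_rev]
    norm_num [h2]
    linarith
  obtain ⟨r, hr, -⟩ := hensels_lemma hnorm
  exact ⟨r, by simpa [sub_eq_zero, sq, eq_comm] using hr⟩

theorem ZMod.exists_mul_sq_add_three_mul_sq_eq_one {r : ZMod 8} (hr : IsUnit r) :
    ∃ a b : ZMod 8, r * (a ^ 2 + 3 * b ^ 2) = 1 := by
  revert r
  decide

theorem Padic.exists_eq_sq_add_three_mul_sq_of_norm_eq_one {w : ℚ_[2]} (hw : ‖w‖ = 1) :
    ∃ x y : ℚ_[2], w = x ^ 2 + 3 * y ^ 2 := by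
  set W : ℤ_[2] := ⟨w, hw.le⟩
  obtain ⟨a, b, hab⟩ := ZMod.exists_mul_sq_add_three_mul_sq_eq_one (r := toZModPow 3 W)
    ((PadicInt.isUnit_iff.2 hw).map _)
  set c : ℤ_[2] := (a.val : ℤ_[2]) ^ 2 + 3 * (b.val : ℤ_[2]) ^ 2
  have hWc : toZModPow 3 (W * c) = 1 := by
    simpa only [c, map_mul, map_add, map_pow, map_natCast, ZMod.natCast_zmod_val, map_ofNat]
  obtain ⟨s, hs⟩ := isSquare_of_toZModPow_three_eq_one hWc
  have hc : (c : ℚ_[2]) ≠ 0 := by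
    intro hc
    rw [PadicInt.coe_eq_zero.1 hc, mul_zero, map_zero] at hWc
    exact absurd hWc (by decide)
  have hs' : w * c = s * s := by simpa using congrArg ((↑) : ℤ_[2] → ℚ_[2]) hs
  have hc' : (c : ℚ_[2]) = (a.val : ℚ_[2]) ^ 2 + 3 * (b.val : ℚ_[2]) ^ 2 := by push_cast [c]; rfl
  refine ⟨a.val * s / c, b.val * s / c, ?_⟩
  field_simp
  linear_combination (c : ℚ_[2]) * hs' + (s : ℚ_[2]) ^ 2 * hc'

/-- A nonzero `2`-adic number is of the form `x² + 3·y²` if and only if its `2`-adic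
valuation is even. -/
theorem two_adic_x_sq_add_three_y_sq_iff_even_valuation
    (u : ℚ_[2]) (hu : u ≠ 0) :
    (∃ x y : ℚ_[2], u = x ^ 2 + 3 * y ^ 2) ↔ Even u.valuation := by
  constructor
  · rintro ⟨x, y, rfl⟩
    have hnorm := Padic.norm_sq_sub_mul_add_sq (x + y) (2 * y)
    rw [show (x + y) ^ 2 - (x + y) * (2 * y) + (2 * y) ^ 2 = x ^ 2 + 3 * y ^ 2 by ring] at hnorm
    rcases max_choice ‖x + y‖ ‖2 * y‖ with h | h <;> rw [h] at hnorm <;>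
      exact Padic.even_valuation_of_norm_eq_sq hu hnorm
  · intro h
    obtain ⟨c, w, hw, rfl⟩ := Padic.exists_eq_sq_mul_of_even_valuation hu h
    obtain ⟨x, y, rfl⟩ := Padic.exists_eq_sq_add_three_mul_sq_of_norm_eq_one hw
    exact ⟨c * x, c * y, by ring⟩
end

section
/- Let p be a prime with p ≡ 3 (mod 4) and let a, b ∈ ℚ_p with a ≠ 0 and b ≠ 0. Then a + b·i is a square in ℚ_p(i), i.e. there exist r, s ∈ ℚ_p with a = r² − s² and b = 2·r·s, if and only if min(valuation of a, valuation of b) is even and a² + b² is a square in ℚ_p. -/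
/-! Since `-1` is not a square modulo `p`, `1 + t²` is a unit for every `t ∈ ℤ_p`, so
`‖x² + y²‖ = max ‖x²‖ ‖y²‖`, i.e. `v(x² + y²) = 2 min (v x) (v y)`. Applied to
`a² + b² = (r² + s²)²` this gives the parity condition. Conversely, let `c² = a² + b²` and
`u = (a + c)/2`, `u' = (a - c)/2`. Then `u u' = -(b/2)²` and, as `u ± u'` are `a` and `c`,
`min (v u) (v u') = v c = min (v a) (v b)`; so `v u` is even. By Hensel's lemma and since `-1` is
a nonsquare residue, `u` or `-u` is then a square, and either gives a square root of `a + b i`. -/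

theorem exists_eq_sq_sub_sq_of_isSquare_half_add {K : Type*} [Field K] [NeZero (2 : K)]
    {a b c : K} (hb : b ≠ 0) (hc : a ^ 2 + b ^ 2 = c ^ 2)
    (h : IsSquare ((a + c) / 2) ∨ IsSquare (-((a + c) / 2))) :
    ∃ r s : K, a = r ^ 2 - s ^ 2 ∧ b = 2 * r * s := by
  have hac : a + c ≠ 0 := by
    intro h0
    refine hb (pow_eq_zero_iff two_ne_zero |>.1 ?_)
    linear_combination hc + (c - a) * h0
  rcases h with ⟨r, hr⟩ | ⟨s, hs⟩
  · have hr' : a + c = 2 * (r * r) := by rw [← hr, mul_div_cancel₀ _ two_ne_zero]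
    have hr0 : r ≠ 0 := by rintro rfl; exact hac (by simpa using hr')
    refine ⟨r, b / (2 * r), ?_, by field_simp⟩
    field_simp
    linear_combination hc + (c + 2 * r ^ 2 - a) * hr'
  · have hs' : a + c = -(2 * (s * s)) := by
      rw [← hs, mul_neg, mul_div_cancel₀ _ two_ne_zero, neg_neg]
    have hs0 : s ≠ 0 := by rintro rfl; exact hac (by simpa using hs')
    refine ⟨b / (2 * s), s, ?_, by field_simp⟩
    field_simp
    linear_combination -hc + (2 * s ^ 2 + a - c) * hs'

theorem FiniteField.isSquare_or_isSquare_neg {F : Type*} [Field F] [Fintype F]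
    (h : ¬IsSquare (-1 : F)) (a : F) : IsSquare a ∨ IsSquare (-a) := by
  classical
  rcases eq_or_ne a 0 with rfl | ha
  · exact Or.inl ⟨0, by simp⟩
  rw [← quadraticChar_one_iff_isSquare ha, ← quadraticChar_one_iff_isSquare (neg_ne_zero.2 ha),
    neg_eq_neg_one_mul, map_mul, quadraticChar_neg_one_iff_not_isSquare.2 h]
  rcases quadraticChar_dichotomy ha with h1 | h1 <;> simp [h1]

namespace PadicInt

variable {p : ℕ} [Fact p.Prime]

theorem toZMod_eq_zero_iff_norm_lt_one (z : ℤ_[p]) : toZMod z = 0 ↔ ‖z‖ < 1 := by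
  rw [← RingHom.mem_ker, ker_toZMod, IsLocalRing.mem_maximalIdeal, mem_nonunits]

theorem norm_eq_one_of_toZMod_ne_zero {z : ℤ_[p]} (h : toZMod z ≠ 0) : ‖z‖ = 1 :=
  (norm_le_one z).antisymm (not_lt.1 (mt (toZMod_eq_zero_iff_norm_lt_one z).2 h))

theorem isSquare_of_isSquare_toZMod (hp : p ≠ 2) {z : ℤ_[p]} (hz : IsUnit z)
    (h : IsSquare (toZMod z)) : IsSquare z := by
  obtain ⟨t, ht⟩ := h
  obtain ⟨y, rfl⟩ := ZMod.ringHom_surjective (toZMod : ℤ_[p] →+* ZMod p) t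
  have hy : toZMod y ≠ 0 := by
    rintro hy
    rw [hy, mul_zero] at ht
    exact (hz.map toZMod).ne_zero ht
  have h2 : (2 : ZMod p) ≠ 0 := Ring.two_ne_zero (by rwa [ZMod.ringChar_zmod_n])
  have hderiv : ‖(2 : ℤ_[p]) * y‖ = 1 :=
    norm_eq_one_of_toZMod_ne_zero (by rw [map_mul, map_ofNat]; exact mul_ne_zero h2 hy)
  have hval : ‖y ^ 2 - z‖ < 1 := by
    rw [← toZMod_eq_zero_iff_norm_lt_one, map_sub, map_pow, ht, sq, sub_self]
  have hnorm : ‖(Polynomial.X ^ 2 - Polynomial.C z).aeval y‖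
      < ‖(Polynomial.X ^ 2 - Polynomial.C z).derivative.aeval y‖ ^ 2 := by
    simpa [hderiv, ← two_mul] using hval
  obtain ⟨x, hx, -⟩ := hensels_lemma hnorm
  exact ⟨x, by simpa [sub_eq_zero, sq, eq_comm] using hx⟩

theorem isSquare_or_isSquare_neg_of_isUnit (hp : p % 4 = 3) {z : ℤ_[p]} (hz : IsUnit z) :
    IsSquare z ∨ IsSquare (-z) := by
  have hp2 : p ≠ 2 := by omega
  have hres : ¬IsSquare (-1 : ZMod p) := by rw [ZMod.exists_sq_eq_neg_one_iff]; simp [hp]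
  exact (FiniteField.isSquare_or_isSquare_neg hres (toZMod z)).imp
    (isSquare_of_isSquare_toZMod hp2 hz)
    (fun h ↦ isSquare_of_isSquare_toZMod hp2 hz.neg (by rwa [map_neg]))

theorem norm_one_add_sq (hp : p % 4 = 3) (z : ℤ_[p]) : ‖1 + z ^ 2‖ = 1 := by
  refine norm_eq_one_of_toZMod_ne_zero fun h ↦ ZMod.exists_sq_eq_neg_one_iff.1 ?_ hp
  rw [map_add, map_one, map_pow] at h
  exact ⟨toZMod z, by linear_combination -h⟩

end PadicInt

namespace Padic

variable {p : ℕ} [Fact p.Prime]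

theorem norm_sq_add_sq (hp : p % 4 = 3) (x y : ℚ_[p]) :
    ‖x ^ 2 + y ^ 2‖ = max ‖x ^ 2‖ ‖y ^ 2‖ := by
  wlog hyx : ‖y‖ ≤ ‖x‖ generalizing x y
  · rw [add_comm, max_comm]
    exact this y x (le_of_not_ge hyx)
  rcases eq_or_ne x 0 with rfl | hx
  · simp [norm_le_zero_iff.1 (norm_zero (E := ℚ_[p]) ▸ hyx)]
  have ht : ‖y / x‖ ≤ 1 := by
    rw [norm_div]
    exact div_le_one_of_le₀ hyx (norm_nonneg _)
  have hunit : ‖1 + (y / x) ^ 2‖ = 1 := PadicInt.norm_one_add_sq hp ⟨y / x, ht⟩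
  have hxy : x ^ 2 + y ^ 2 = x ^ 2 * (1 + (y / x) ^ 2) := by
    field_simp
  rw [hxy, norm_mul, hunit, mul_one, max_eq_left]
  simpa only [norm_pow] using pow_le_pow_left₀ (norm_nonneg _) hyx 2

theorem norm_two (hp : p ≠ 2) : ‖(2 : ℚ_[p])‖ = 1 := by
  simpa using (norm_natCast_eq_one_iff (p := p) (n := 2)).2
    ((Nat.coprime_primes Fact.out Nat.prime_two).2 hp)

theorem sq_add_sq_ne_zero (hp : p % 4 = 3) {x : ℚ_[p]} (hx : x ≠ 0) (y : ℚ_[p]) :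
    x ^ 2 + y ^ 2 ≠ 0 := by
  rw [← norm_ne_zero_iff, norm_sq_add_sq hp]
  exact (lt_max_of_lt_left (norm_pos_iff.2 (pow_ne_zero 2 hx))).ne'

theorem max_norm_add_norm_sub (hp : p ≠ 2) (x y : ℚ_[p]) :
    max ‖x + y‖ ‖x - y‖ = max ‖x‖ ‖y‖ := by
  refine le_antisymm (max_le (nonarchimedean x y)
    (by simpa [sub_eq_add_neg] using nonarchimedean x (-y))) (max_le ?_ ?_)
  · calc ‖x‖ = ‖(x + y) + (x - y)‖ := by
          rw [add_add_sub_cancel, ← two_mul, norm_mul, norm_two hp, one_mul]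
      _ ≤ _ := nonarchimedean _ _
  · calc ‖y‖ = ‖(x + y) + -(x - y)‖ := by
          rw [← sub_eq_add_neg, add_sub_sub_cancel, ← two_mul, norm_mul, norm_two hp, one_mul]
      _ ≤ max ‖x + y‖ ‖-(x - y)‖ := nonarchimedean _ _
      _ = _ := by rw [norm_neg]

theorem valuation_eq_min_of_norm_eq_max {x y z : ℚ_[p]} (hx : x ≠ 0) (hy : y ≠ 0)
    (hz : z ≠ 0) (h : ‖z‖ = max ‖x‖ ‖y‖) : z.valuation = min x.valuation y.valuation := by
  have hp : StrictMono fun n : ℤ ↦ (p : ℝ) ^ n :=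
    zpow_right_strictMono₀ (mod_cast (Fact.out : p.Prime).one_lt)
  rw [norm_eq_zpow_neg_valuation hx, norm_eq_zpow_neg_valuation hy,
    norm_eq_zpow_neg_valuation hz, ← hp.monotone.map_max, hp.injective.eq_iff] at h
  omega

theorem valuation_eq_of_norm_eq_s16 {x y : ℚ_[p]} (hx : x ≠ 0) (hy : y ≠ 0) (h : ‖x‖ = ‖y‖) :
    x.valuation = y.valuation := by
  simpa using valuation_eq_min_of_norm_eq_max hy hy hx (by rw [h, max_self])

theorem isSquare_or_isSquare_neg_of_even_valuation (hp : p % 4 = 3) {x : ℚ_[p]}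
    (h : Even x.valuation) : IsSquare x ∨ IsSquare (-x) := by
  rcases eq_or_ne x 0 with rfl | hx
  · exact Or.inl ⟨0, by simp⟩
  obtain ⟨k, hk⟩ := h
  have hp0 : (p : ℚ_[p]) ≠ 0 := Nat.cast_ne_zero.2 (Fact.out : p.Prime).ne_zero
  set u := x * (p : ℚ_[p]) ^ (-x.valuation)
  have hu : ‖u‖ = 1 := by
    rw [norm_mul, norm_eq_zpow_neg_valuation hx, norm_p_zpow, neg_neg,
      ← zpow_add₀ (mod_cast hp0), neg_add_cancel, zpow_zero]
  have hxu : x = u * ((p : ℚ_[p]) ^ k) ^ 2 := by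
    rw [← zpow_natCast, ← zpow_mul, mul_assoc, ← zpow_add₀ hp0,
      show -x.valuation + k * ((2 : ℕ) : ℤ) = 0 by omega, zpow_zero, mul_one]
  rw [hxu, ← neg_mul, ← PadicInt.mkUnits_eq hu]
  exact (PadicInt.isSquare_or_isSquare_neg_of_isUnit hp (PadicInt.mkUnits hu).isUnit).imp
    (fun h ↦ (h.map PadicInt.Coe.ringHom).mul (IsSquare.sq _))
    (fun h ↦ (h.map PadicInt.Coe.ringHom).mul (IsSquare.sq _))

theorem valuation_sq_add_sq (hp : p % 4 = 3) {x y : ℚ_[p]} (hx : x ≠ 0) (hy : y ≠ 0) :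
    (x ^ 2 + y ^ 2).valuation = 2 * min x.valuation y.valuation := by
  rw [valuation_eq_min_of_norm_eq_max (pow_ne_zero 2 hx) (pow_ne_zero 2 hy)
    (sq_add_sq_ne_zero hp hx y) (norm_sq_add_sq hp x y), valuation_pow, valuation_pow]
  push_cast
  omega

theorem even_min_valuation_of_eq_sq_sub_sq (hp : p % 4 = 3) {a b r s : ℚ_[p]} (ha : a ≠ 0)
    (hb : b ≠ 0) (hars : a = r ^ 2 - s ^ 2) (hbrs : b = 2 * r * s) :
    Even (min a.valuation b.valuation) := by
  have hr : r ≠ 0 := by rintro rfl; simp [hbrs] at hb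
  have hs : s ≠ 0 := by rintro rfl; simp [hbrs] at hb
  have h := congrArg valuation (show a ^ 2 + b ^ 2 = (r ^ 2 + s ^ 2) ^ 2 by rw [hars, hbrs]; ring)
  rw [valuation_sq_add_sq hp ha hb, valuation_pow, valuation_sq_add_sq hp hr hs] at h
  exact ⟨min r.valuation s.valuation, by push_cast at h; omega⟩

theorem even_valuation_half_add (hp : p % 4 = 3) {a b c : ℚ_[p]} (ha : a ≠ 0) (hb : b ≠ 0)
    (hc : a ^ 2 + b ^ 2 = c ^ 2) (hmin : Even (min a.valuation b.valuation)) :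
    Even ((a + c) / 2).valuation := by
  set u := (a + c) / 2
  set u' := (a - c) / 2
  have huu' : u * u' = -(b / 2) ^ 2 := by
    simp only [u, u']
    linear_combination hc / 4
  obtain ⟨hu, hu'⟩ : u ≠ 0 ∧ u' ≠ 0 := mul_ne_zero_iff.1 (by simpa [huu'] using hb)
  have hc0 : c ≠ 0 := by
    rintro rfl
    exact sq_add_sq_ne_zero hp ha b (by simpa using hc)
  have hvc : c.valuation = min a.valuation b.valuation := by
    have h := valuation_sq_add_sq hp ha hb
    rw [hc, valuation_pow] at h
    push_cast at h
    omega
  have hac : ‖a‖ ≤ ‖c‖ := by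
    refine le_of_pow_le_pow_left₀ two_ne_zero (norm_nonneg _) ?_
    rw [← norm_pow, ← norm_pow, ← hc, norm_sq_add_sq hp]
    exact le_max_left _ _
  have hnorm : ‖c‖ = max ‖u‖ ‖u'‖ := by
    rw [← max_norm_add_norm_sub (by omega), show u + u' = a by ring, show u - u' = c by ring,
      max_eq_right hac]
  have hvuu' := valuation_eq_min_of_norm_eq_max hu hu' hc0 hnorm
  have hsum : u.valuation + u'.valuation = 2 * b.valuation := by
    rw [← valuation_mul hu hu', valuation_eq_of_norm_eq_s16 (mul_ne_zero hu hu') (pow_ne_zero 2 hb)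
      (by rw [huu', norm_neg, norm_pow, norm_pow, norm_div, norm_two (by omega), div_one]),
      valuation_pow]
    push_cast
    ring
  rw [Int.even_iff] at hmin ⊢
  omega

end Padic

/-- For `p ≡ 3 mod 4` and nonzero `a, b ∈ ℚ_p`, the element `a + b·i` is a square in
`ℚ_p(i)` (expressed as `a = r² − s²`, `b = 2·r·s`) if and only if
`min (val a) (val b)` is even and `a² + b²` is a square in `ℚ_p`. -/
theorem padic_gaussian_square_iff
    (p : ℕ) [Fact p.Prime] (hp : p % 4 = 3) (a b : ℚ_[p]) (ha : a ≠ 0) (hb : b ≠ 0) :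
    (∃ r s : ℚ_[p], a = r ^ 2 - s ^ 2 ∧ b = 2 * r * s) ↔
    (Even (min a.valuation b.valuation) ∧ IsSquare (a ^ 2 + b ^ 2)) := by
  constructor
  · rintro ⟨r, s, hars, hbrs⟩
    exact ⟨Padic.even_min_valuation_of_eq_sq_sub_sq hp ha hb hars hbrs,
      r ^ 2 + s ^ 2, by rw [hars, hbrs]; ring⟩
  · rintro ⟨hmin, c, hc⟩
    have hc' : a ^ 2 + b ^ 2 = c ^ 2 := by rw [hc, sq]
    exact exists_eq_sq_sub_sq_of_isSquare_half_add hb hc'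
      (Padic.isSquare_or_isSquare_neg_of_even_valuation hp
        (Padic.even_valuation_half_add hp ha hb hc' hmin))
end

section
/- Let F be a field of characteristic different from 2, let c ∈ F, and let K be a field with an F-algebra structure containing an element α with α² = algebraMap F K c, with α not in the range of algebraMap F K, and such that every element of K equals algebraMap F K x + (algebraMap F K y) * α for some x, y ∈ F. Then for all a, b ∈ F with b ≠ 0: the element algebraMap F K a + (algebraMap F K b) * α is a square in K if and only if there exists s ∈ F with s² = a² − b²·c such that (a + s)/2 is a square in F or (a − s)/2 is a square in F. -/
/-!
Writing a square root of `a + bα` as `x + yα` gives `a = x² + y²c` and `b = 2xy`, so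
`s = x² − y²c` is a square root of the norm `a² − b²c` with `(a + s)/2 = x²`. Conversely,
from `x² = (a + s)/2` one recovers `y = b/(2x)`; here `x ≠ 0` because `b ≠ 0` and `c ≠ 0`.
Replacing `s` by `−s` handles the case `(a − s)/2`.
-/

section QuadraticExtension

variable {F K : Type*} [Field F] [CommRing K] [Algebra F K] {c : F} {α : K}

theorem add_mul_sq_eq_of_sq_eq (hα : α ^ 2 = algebraMap F K c) (x y : F) :
    (algebraMap F K x + algebraMap F K y * α) ^ 2 =
      algebraMap F K (x ^ 2 + y ^ 2 * c) + algebraMap F K (2 * x * y) * α := by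
  simp only [map_add, map_mul, map_pow, map_ofNat]
  linear_combination (algebraMap F K y) ^ 2 * hα

theorem eq_and_eq_of_add_mul_eq [Nontrivial K] (hαn : α ∉ Set.range (algebraMap F K))
    {x y x' y' : F}
    (h : algebraMap F K x + algebraMap F K y * α = algebraMap F K x' + algebraMap F K y' * α) :
    x = x' ∧ y = y' := by
  obtain rfl | hy := eq_or_ne y y'
  · exact ⟨(algebraMap F K).injective (add_right_cancel h), rfl⟩
  · refine absurd ⟨(x' - x) / (y - y'), ?_⟩ hαn
    have hunit : algebraMap F K (y - y')⁻¹ * algebraMap F K (y - y') = 1 := by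
      rw [← map_mul, inv_mul_cancel₀ (sub_ne_zero.2 hy), map_one]
    rw [map_sub] at hunit
    rw [div_eq_mul_inv, mul_comm, map_mul, map_sub]
    linear_combination -(algebraMap F K (y - y')⁻¹) * h + α * hunit

theorem exists_sq_eq_and_isSquare_of_isSquare_add_mul [Nontrivial K] (h2 : (2 : F) ≠ 0)
    (hα : α ^ 2 = algebraMap F K c) (hαn : α ∉ Set.range (algebraMap F K))
    (hK : ∀ z : K, ∃ x y : F, z = algebraMap F K x + algebraMap F K y * α) {a b : F}
    (h : IsSquare (algebraMap F K a + algebraMap F K b * α)) :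
    ∃ s : F, s ^ 2 = a ^ 2 - b ^ 2 * c ∧ IsSquare ((a + s) / 2) := by
  obtain ⟨r, hr⟩ := h
  obtain ⟨x, y, rfl⟩ := hK r
  rw [← sq, add_mul_sq_eq_of_sq_eq hα] at hr
  obtain ⟨rfl, rfl⟩ := eq_and_eq_of_add_mul_eq hαn hr
  refine ⟨x ^ 2 - y ^ 2 * c, by ring, x, ?_⟩
  field_simp
  ring

theorem sq_add_sq_mul_eq_of_two_mul_sq_eq {a b s x : F} (h2 : (2 : F) ≠ 0) (hx : x ≠ 0)
    (hs : s ^ 2 = a ^ 2 - b ^ 2 * c) (hx2 : 2 * x ^ 2 = a + s) :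
    x ^ 2 + (b / (2 * x)) ^ 2 * c = a := by
  field_simp
  linear_combination (2 * x ^ 2 - a + s) * hx2 + hs

theorem isSquare_add_mul_of_isSquare (h2 : (2 : F) ≠ 0) (hα : α ^ 2 = algebraMap F K c)
    (hc : c ≠ 0) {a b s : F} (hb : b ≠ 0) (hs : s ^ 2 = a ^ 2 - b ^ 2 * c)
    (hsq : IsSquare ((a + s) / 2)) :
    IsSquare (algebraMap F K a + algebraMap F K b * α) := by
  obtain ⟨x, hx⟩ := hsq
  have hx2 : 2 * x ^ 2 = a + s := by rw [sq, ← hx]; field_simp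
  have hx0 : x ≠ 0 := by
    rintro rfl
    have : b ^ 2 * c = 0 := by linear_combination hs - (a - s) * hx2
    exact mul_ne_zero (pow_ne_zero 2 hb) hc this
  refine ⟨algebraMap F K x + algebraMap F K (b / (2 * x)) * α, ?_⟩
  rw [← sq, add_mul_sq_eq_of_sq_eq hα, sq_add_sq_mul_eq_of_two_mul_sq_eq h2 hx0 hs hx2]
  congr 3
  field_simp

end QuadraticExtension

/-- Criterion for `a + b·α` to be a square in a quadratic extension `K = F[α]` with
`α² = c`: it is a square iff `a² − b²·c` has a square root `s` in `F` such that
`(a + s)/2` or `(a − s)/2` is a square in `F`. -/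
theorem square_in_quadratic_extension_iff
    (F K : Type*) [Field F] [Field K] [Algebra F K]
    (hchar : ringChar F ≠ 2) (c : F) (α : K)
    (hα : α ^ 2 = algebraMap F K c)
    (hαn : α ∉ Set.range (algebraMap F K))
    (hK : ∀ z : K, ∃ x y : F, z = algebraMap F K x + algebraMap F K y * α)
    (a b : F) (hb : b ≠ 0) :
    IsSquare (algebraMap F K a + algebraMap F K b * α) ↔
    ∃ s : F, s ^ 2 = a ^ 2 - b ^ 2 * c ∧
      (IsSquare ((a + s) / 2) ∨ IsSquare ((a - s) / 2)) := by
  have h2 : (2 : F) ≠ 0 := Ring.two_ne_zero hchar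
  have hc : c ≠ 0 := by
    rintro rfl
    rw [map_zero, pow_eq_zero_iff two_ne_zero] at hα
    exact hαn ⟨0, by rw [map_zero, hα]⟩
  constructor
  · intro h
    obtain ⟨s, hs, hsq⟩ := exists_sq_eq_and_isSquare_of_isSquare_add_mul h2 hα hαn hK h
    exact ⟨s, hs, Or.inl hsq⟩
  · rintro ⟨s, hs, hsq | hsq⟩
    · exact isSquare_add_mul_of_isSquare h2 hα hc hb hs hsq
    · refine isSquare_add_mul_of_isSquare h2 hα hc hb (s := -s) (by rwa [neg_sq]) ?_
      rwa [← sub_eq_add_neg]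
end

section
/- Let p be a prime, n a positive integer, b ∈ ℚ_p with ‖b‖ = (p : ℝ)⁻¹ (i.e. b has p-adic valuation 1), and a ∈ ℤ_p with ‖a‖ = 1. If there exists an element c of the quotient ring AdjoinRoot (X^n − C b) (adjoining to ℚ_p a root of X^n − C b) with c^n equal to the image of (a : ℚ_p) in AdjoinRoot (X^n − C b), then a is an n-th power modulo p: there exists z ∈ ZMod p with z^n = PadicInt.toZMod a. -/
/-!
Send the root of `X ^ n - C b` to some `π` with `π ^ n = b` in the algebraic closure of `ℚ_p`,
which carries the multiplicative ultrametric spectral norm. There `‖π‖ ^ n = p⁻¹`, so for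
`i < n` the nonzero summands `gᵢ πⁱ` of the image `γ = ∑ gᵢ πⁱ` of `c` have norms
`p ^ (-(n v(gᵢ) + i) / n)`, which are pairwise distinct; hence `‖γ‖` is the largest of them.
Since `‖γ‖ ^ n = ‖a‖ = 1`, that largest summand is `g₀`, a `p`-adic unit, and all the others
have norm `< 1`. Thus `‖γ - g₀‖ < 1`, so `‖a - g₀ ^ n‖ = ‖γ ^ n - g₀ ^ n‖ < 1`, i.e.
`a ≡ g₀ ^ n mod p`.
-/

open Polynomial

theorem PadicInt.toZMod_eq_of_norm_sub_lt_one {p : ℕ} [Fact p.Prime] {x y : ℤ_[p]}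
    (h : ‖x - y‖ < 1) : toZMod x = toZMod y := by
  rw [← sub_eq_zero, ← map_sub, ← RingHom.mem_ker, ker_toZMod, IsLocalRing.mem_maximalIdeal,
    mem_nonunits]
  exact h

theorem IsUltrametricDist.norm_sum_lt_of_forall_norm_lt {M ι : Type*} [SeminormedAddCommGroup M]
    [IsUltrametricDist M] {s : Finset ι} {f : ι → M} {C : ℝ} (hC : 0 < C)
    (h : ∀ i ∈ s, ‖f i‖ < C) : ‖∑ i ∈ s, f i‖ < C := by
  rcases s.eq_empty_or_nonempty with rfl | hs
  · simpa using hC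
  · obtain ⟨i, hi, hle⟩ := exists_norm_finsetSum_le_of_nonempty hs f
    exact hle.trans_lt (h i hi)

theorem IsUltrametricDist.norm_pow_sub_pow_le {K : Type*} [NormedField K] [IsUltrametricDist K]
    {x y : K} (hx : ‖x‖ ≤ 1) (hy : ‖y‖ ≤ 1) (n : ℕ) : ‖x ^ n - y ^ n‖ ≤ ‖x - y‖ := by
  rw [← geom_sum₂_mul, norm_mul]
  refine mul_le_of_le_one_left (norm_nonneg _) <|
    norm_sum_le_of_forall_le_of_nonneg zero_le_one fun i _ ↦ ?_
  rw [norm_mul, norm_pow, norm_pow]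
  exact mul_le_one₀ (pow_le_one₀ (norm_nonneg _) hx) (by positivity) (pow_le_one₀ (norm_nonneg _) hy)

section NthRootOfUniformizer

variable {p : ℕ} [Fact p.Prime] {K : Type*} [NormedField K] [NormedAlgebra ℚ_[p] K]
  {n : ℕ} {π : K}

theorem norm_algebraMap_mul_pow_pow_eq_zpow (hπ : ‖π‖ ^ n = (p : ℝ)⁻¹) {x : ℚ_[p]} (hx : x ≠ 0)
    (i : ℕ) : ‖algebraMap ℚ_[p] K x * π ^ i‖ ^ n = (p : ℝ) ^ (-(n * x.valuation + i)) := by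
  have hp : (p : ℝ) ≠ 0 := by exact_mod_cast (Fact.out : p.Prime).ne_zero
  rw [norm_mul, norm_algebraMap', norm_pow, mul_pow, ← pow_mul, mul_comm i, pow_mul, hπ,
    Padic.norm_eq_zpow_neg_valuation hx, ← zpow_natCast, ← zpow_mul, inv_pow, ← zpow_natCast,
    ← zpow_neg, ← zpow_add₀ hp]
  congr 1
  ring

theorem eq_of_norm_algebraMap_mul_pow_eq (hπ : ‖π‖ ^ n = (p : ℝ)⁻¹) {x y : ℚ_[p]} (hx : x ≠ 0)
    (hy : y ≠ 0) {i j : ℕ} (hi : i < n) (hj : j < n)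
    (h : ‖algebraMap ℚ_[p] K x * π ^ i‖ = ‖algebraMap ℚ_[p] K y * π ^ j‖) : i = j := by
  have hp : (1 : ℝ) < p := by exact_mod_cast (Fact.out : p.Prime).one_lt
  have hpow := congrArg (· ^ n) h
  simp only [norm_algebraMap_mul_pow_pow_eq_zpow hπ hx, norm_algebraMap_mul_pow_pow_eq_zpow hπ hy]
    at hpow
  have hexp := zpow_right_injective₀ (zero_lt_one.trans hp) hp.ne' hpow
  have hdvd : (n : ℤ) ∣ (i : ℤ) - j := ⟨y.valuation - x.valuation, by linarith⟩
  have := Int.eq_zero_of_abs_lt_dvd hdvd (by rw [abs_lt]; omega)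
  omega

variable [IsUltrametricDist K]

theorem norm_coeff_zero_eq_one_and_norm_aeval_sub_lt_one (hπ : ‖π‖ ^ n = (p : ℝ)⁻¹)
    {g : ℚ_[p][X]} (hg : g.natDegree < n) (h1 : ‖aeval π g‖ = 1) :
    ‖g.coeff 0‖ = 1 ∧ ‖aeval π g - algebraMap ℚ_[p] K (g.coeff 0)‖ < 1 := by
  classical
  set t : ℕ → K := fun i ↦ algebraMap ℚ_[p] K (g.coeff i) * π ^ i
  have hsum : aeval π g = ∑ i ∈ g.support, t i := by rw [aeval_def, eval₂_eq_sum, sum_def]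
  have hinj : ∀ i ∈ g.support, ∀ j ∈ g.support, ‖t i‖ = ‖t j‖ → i = j := fun i hi j hj ↦
    eq_of_norm_algebraMap_mul_pow_eq hπ (mem_support_iff.mp hi) (mem_support_iff.mp hj)
      ((le_natDegree_of_mem_supp i hi).trans_lt hg) ((le_natDegree_of_mem_supp j hj).trans_lt hg)
  have hne : g.support.Nonempty := support_nonempty.mpr <| by rintro rfl; simp at h1
  have hsup : ‖aeval π g‖ = g.support.sup' hne (‖t ·‖) := by
    rw [hsum]
    exact IsUltrametricDist.norm_sum_eq_sup'_of_pairwise_ne hne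
      fun i hi j hj hij h ↦ hij (hinj i hi j hj h)
  have hle : ∀ i ∈ g.support, ‖t i‖ ≤ 1 := fun i hi ↦ h1 ▸ hsup ▸ g.support.le_sup' (‖t ·‖) hi
  obtain ⟨k, hk, hk1⟩ := g.support.exists_mem_eq_sup' hne (‖t ·‖)
  replace hk1 : ‖t k‖ = 1 := by rw [← hk1, ← hsup, h1]
  -- `‖t k‖ = 1 = ‖1 * π ^ 0‖` forces `k = 0`
  have hk0 : k = 0 := eq_of_norm_algebraMap_mul_pow_eq hπ (mem_support_iff.mp hk) one_ne_zero
    ((le_natDegree_of_mem_supp k hk).trans_lt hg) ((Nat.zero_le _).trans_lt hg)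
    (by simpa [t] using hk1)
  subst hk0
  have ht0 : t 0 = algebraMap ℚ_[p] K (g.coeff 0) := by simp [t]
  refine ⟨by rw [← norm_algebraMap' K, ← ht0, hk1], ?_⟩
  rw [hsum, ← g.support.add_sum_erase t hk, ← ht0, add_sub_cancel_left]
  refine IsUltrametricDist.norm_sum_lt_of_forall_norm_lt one_pos fun i hi ↦ ?_
  refine (hle i (Finset.mem_of_mem_erase hi)).lt_of_ne fun hi1 ↦ Finset.ne_of_mem_erase hi ?_
  exact hinj i (Finset.mem_of_mem_erase hi) 0 hk (hi1.trans hk1.symm)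

theorem exists_norm_pow_sub_lt_one_of_aeval_pow_eq (hπ : ‖π‖ ^ n = (p : ℝ)⁻¹) {g : ℚ_[p][X]}
    (hg : g.natDegree < n) {a : ℤ_[p]} (ha : ‖a‖ = 1)
    (h : aeval π g ^ n = algebraMap ℚ_[p] K a) : ∃ x : ℤ_[p], ‖x ^ n - a‖ < 1 := by
  have hn : n ≠ 0 := ((Nat.zero_le _).trans_lt hg).ne'
  have h1 : ‖aeval π g‖ = 1 := by
    rw [← pow_eq_one_iff_of_nonneg (norm_nonneg _) hn, ← norm_pow, h, norm_algebraMap']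
    exact ha
  obtain ⟨h0, hlt⟩ := norm_coeff_zero_eq_one_and_norm_aeval_sub_lt_one hπ hg h1
  set x : ℤ_[p] := ⟨g.coeff 0, h0.le⟩
  refine ⟨x, ?_⟩
  rw [PadicInt.norm_def, ← norm_algebraMap' K, PadicInt.coe_sub, PadicInt.coe_pow, map_sub,
    map_pow, ← h, norm_sub_rev]
  calc ‖aeval π g ^ n - algebraMap ℚ_[p] K (g.coeff 0) ^ n‖
      ≤ ‖aeval π g - algebraMap ℚ_[p] K (g.coeff 0)‖ :=
        IsUltrametricDist.norm_pow_sub_pow_le h1.le (by rw [norm_algebraMap', h0]) n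
    _ < 1 := hlt

end NthRootOfUniformizer

/-- If a `p`-adic unit `a` becomes an `n`-th power after adjoining to `ℚ_p` a root of
`Xⁿ − b`, where `b` has `p`-adic valuation `1`, then `a` is an `n`-th power modulo
`p`. -/
theorem nth_power_mod_p_of_nth_power_in_adjoinRoot
    (p : ℕ) [Fact p.Prime] (n : ℕ) (hn : 0 < n)
    (b : ℚ_[p]) (hb : ‖b‖ = (p : ℝ)⁻¹) (a : ℤ_[p]) (ha : ‖a‖ = 1)
    (h : ∃ c : AdjoinRoot (X ^ n - C b),
      c ^ n = algebraMap ℚ_[p] (AdjoinRoot (X ^ n - C b)) (a : ℚ_[p])) :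
    ∃ z : ZMod p, z ^ n = PadicInt.toZMod a := by
  obtain ⟨π, hπ⟩ := IsAlgClosed.exists_pow_nat_eq (algebraMap ℚ_[p] (PadicAlgCl p) b) hn
  have hroot : eval₂ (algebraMap ℚ_[p] (PadicAlgCl p)) π (X ^ n - C b) = 0 := by simp [hπ]
  have hnorm : ‖π‖ ^ n = (p : ℝ)⁻¹ := by rw [← norm_pow, hπ, norm_algebraMap', hb]
  obtain ⟨c, hc⟩ := h
  obtain ⟨g, rfl⟩ := AdjoinRoot.mk_surjective c
  have hpow : aeval π (g %ₘ (X ^ n - C b)) ^ n = algebraMap ℚ_[p] (PadicAlgCl p) a := by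
    have := congrArg (AdjoinRoot.lift (algebraMap ℚ_[p] (PadicAlgCl p)) π hroot) hc
    rwa [map_pow, AdjoinRoot.lift_mk, AdjoinRoot.algebraMap_eq, AdjoinRoot.lift_of, ← aeval_def,
      ← aeval_modByMonic_eq_self_of_root hroot] at this
  have hdeg : (g %ₘ (X ^ n - C b)).natDegree < n := by
    have hf1 : X ^ n - C b ≠ 1 := fun h1 ↦ by simpa [hn.ne'] using congrArg natDegree h1
    simpa using natDegree_modByMonic_lt g (monic_X_pow_sub_C b hn.ne') hf1
  obtain ⟨x, hx⟩ := exists_norm_pow_sub_lt_one_of_aeval_pow_eq hnorm hdeg ha hpow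
  exact ⟨PadicInt.toZMod x, by rw [← map_pow, PadicInt.toZMod_eq_of_norm_sub_lt_one hx]⟩
end
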